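/- arXiv:2405.16208 — 4 statements merged into one kernel-verified Lean document; each statement's English description precedes it below -/
import Mathlib

section
/- Let V and W be finite-dimensional vector spaces with compatible weights (same values λ_1 < ... < λ_ℓ and same multiplicities dim V_{≤λ_i}/V_{≤λ_{i−1}} = dim W_{≤λ_i}/W_{≤λ_{i−1}}). Let T: V → W be linear with ϖ_W(Tv) ≤ ϖ_V(v) for all v (i.e., T is subresonant). Then T is invertible if and only if ϖ_W(Tv) = ϖ_V(v) for every v ∈ V. -/
structure Weight (V : Type*) [AddCommGroup V] [Module ℝ V] where
  w : V → EReal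
  ne_top : ∀ v, w v ≠ ⊤
  eq_bot_iff : ∀ v, w v = ⊥ ↔ v = 0
  smul_eq : ∀ (c : ℝ), c ≠ 0 → ∀ v, w (c • v) = w v
  add_le : ∀ v u, w (v + u) ≤ max (w v) (w u)

/-- The sublevel space `V_{≤ l} = {v : ϖ(v) ≤ l}` is a linear subspace. -/
def sublevel {V : Type*} [AddCommGroup V] [Module ℝ V] (wV : Weight V)
    (l : EReal) : Submodule ℝ V where
  carrier := {v | wV.w v ≤ l}
  add_mem' := fun ha hb => le_trans (wV.add_le _ _) (max_le ha hb)
  zero_mem' := by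
    have h0 : wV.w 0 = ⊥ := (wV.eq_bot_iff 0).mpr rfl
    simpa only [Set.mem_setOf_eq, h0] using (bot_le : (⊥ : EReal) ≤ l)
  smul_mem' := by
    intro c v hv
    by_cases hc : c = 0
    · have h0 : wV.w (c • v) = ⊥ := by
        rw [hc, zero_smul]; exact (wV.eq_bot_iff 0).mpr rfl
      simpa only [Set.mem_setOf_eq, h0] using (bot_le : (⊥ : EReal) ≤ l)
    · simpa only [Set.mem_setOf_eq, wV.smul_eq c hc v] using hv

/-- Two weights are *compatible* if they take the same values and the
associated filtrations have the same multiplicities (equivalently, all the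
sublevel subspaces have equal dimensions). -/
def Compatible {V W : Type*} [AddCommGroup V] [Module ℝ V]
    [AddCommGroup W] [Module ℝ W] (wV : Weight V) (wW : Weight W) : Prop :=
  Set.range wV.w = Set.range wW.w ∧
  ∀ l : EReal, Module.finrank ℝ (sublevel wV l) = Module.finrank ℝ (sublevel wW l)

/-- A subresonant linear map between compatibly weighted spaces is invertible
iff it preserves the weight of every vector. -/
theorem subresonant_linear_bijective_iff
    {V W : Type*} [AddCommGroup V] [Module ℝ V] [FiniteDimensional ℝ V]
    [AddCommGroup W] [Module ℝ W] [FiniteDimensional ℝ W]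
    (wV : Weight V) (wW : Weight W) (hc : Compatible wV wW)
    (T : V →ₗ[ℝ] W) (hsr : ∀ v : V, wW.w (T v) ≤ wV.w v) :
    Function.Bijective T ↔ ∀ v : V, wW.w (T v) = wV.w v := by
  constructor
  · intro hT v
    refine le_antisymm (hsr v) ?_
    set l := wW.w (T v) with hl
    have hmem : T v ∈ sublevel wW l := le_refl l
    have hmap : ∀ x ∈ sublevel wV l, T x ∈ sublevel wW l :=
      fun u hu => le_trans (hsr u) hu
    let S : sublevel wV l →ₗ[ℝ] sublevel wW l := T.restrict hmap
    have hSinj : Function.Injective S := by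
      intro a b hab
      have h1 : T a = T b := congrArg Subtype.val hab
      exact Subtype.ext (hT.injective h1)
    have hsurj : Function.Surjective S :=
      (LinearMap.injective_iff_surjective_of_finrank_eq_finrank (hc.2 l)).mp hSinj
    obtain ⟨u, hu⟩ := hsurj ⟨T v, hmem⟩
    have h2 : T u = T v := congrArg Subtype.val hu
    have h3 : (u : V) = v := hT.injective h2
    rw [← h3]; exact u.2
  · intro h
    have hinj : Function.Injective T := by
      rw [injective_iff_map_eq_zero]
      intro v hv
      have h0 : wV.w v = ⊥ := by
        rw [← h v, hv]; exact (wW.eq_bot_iff 0).mpr rfl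
      exact (wV.eq_bot_iff v).mp h0
    have hVtop : sublevel wV ⊤ = ⊤ := by
      ext v; simp [sublevel, le_top]
    have hWtop : sublevel wW ⊤ = ⊤ := by
      ext v; simp [sublevel, le_top]
    have hdim : Module.finrank ℝ V = Module.finrank ℝ W := by
      have := hc.2 ⊤
      rwa [hVtop, hWtop, finrank_top, finrank_top] at this
    exact ⟨hinj, (LinearMap.injective_iff_surjective_of_finrank_eq_finrank hdim).mp hinj⟩
end

section
/- Let f: V → W and g: W → U be polynomial maps between finite-dimensional weighted vector spaces and suppose ϖ(f) ≤ 0 (f is subresonant). Then ϖ(g ∘ f) ≤ max{ϖ_U(g(0)), ϖ(g) + ϖ(f)}, where the weight of a polynomial map is the maximum of the weights of the polarizations of its homogeneous components, and the weight of a k-multilinear map T: V^{⊗k} → U is max{ϖ_U(T(v_1,...,v_k)) − Σ ϖ_V(v_i) : v_i ≠ 0}. -/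
/-- The weight of a `k`-multilinear map:
`ϖ(T) = max{ϖ_W(T(v₁,…,v_k)) - ∑ᵢ ϖ_V(vᵢ) : vᵢ ≠ 0}`. -/
noncomputable def mwt {V W : Type*} [AddCommGroup V] [Module ℝ V]
    [AddCommGroup W] [Module ℝ W] (wV : Weight V) (wW : Weight W) {k : ℕ}
    (T : MultilinearMap ℝ (fun _ : Fin k => V) W) : EReal :=
  ⨆ (v : Fin k → V) (_ : ∀ i, v i ≠ 0), (wW.w (T v) - ∑ i, wV.w (v i))

/-- A polynomial map `V → W`, recorded through the symmetric multilinear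
polarizations of its homogeneous components. -/
structure PolyMap (V W : Type*) [AddCommGroup V] [Module ℝ V]
    [AddCommGroup W] [Module ℝ W] where
  deg : ℕ
  comp : ∀ k : ℕ, MultilinearMap ℝ (fun _ : Fin k => V) W
  symm : ∀ (k : ℕ) (σ : Equiv.Perm (Fin k)) (v : Fin k → V),
    comp k (v ∘ σ) = comp k v
  zero_of_gt : ∀ k : ℕ, deg < k → comp k = 0

/-- Evaluation of a polynomial map. -/
noncomputable def PolyMap.eval {V W : Type*} [AddCommGroup V] [Module ℝ V]
    [AddCommGroup W] [Module ℝ W] (p : PolyMap V W) (x : V) : W :=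
  ∑ k ∈ Finset.range (p.deg + 1), p.comp k (fun _ => x)

/-- The weight of a polynomial map: the maximum of the weights of the
polarizations of its homogeneous components. -/
noncomputable def pweight {V W : Type*} [AddCommGroup V] [Module ℝ V]
    [AddCommGroup W] [Module ℝ W] (wV : Weight V) (wW : Weight W)
    (p : PolyMap V W) : EReal :=
  ⨆ k : ℕ, mwt wV wW (p.comp k)

/-! ### Auxiliary lemmas -/

section helpers

lemma ereal_toReal {x : EReal} (h1 : x ≠ ⊥) (h2 : x ≠ ⊤) : ∃ r : ℝ, x = (r : EReal) := by
  induction x using EReal.rec with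
  | bot => exact absurd rfl h1
  | coe r => exact ⟨r, rfl⟩
  | top => exact absurd rfl h2

lemma ereal_sum_le_single {m : ℕ} (hm : m ≠ 0) (c : Fin m → EReal) (B : EReal)
    (hc0 : ∀ i, c i ≤ 0) (hcB : ∀ i, c i ≤ B) : ∑ i, c i ≤ B := by
  classical
  have hmpos : 0 < m := Nat.pos_of_ne_zero hm
  set i₀ : Fin m := ⟨0, hmpos⟩
  calc ∑ i, c i ≤ ∑ i, (if i = i₀ then B else 0) := by
        refine Finset.sum_le_sum fun i _ => ?_
        split
        · exact hcB i
        · exact hc0 i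
    _ = B := by
        rw [Finset.sum_ite_eq' Finset.univ i₀ (fun _ => B)]
        simp

variable {V W : Type*} [AddCommGroup V] [Module ℝ V] [AddCommGroup W] [Module ℝ W]

lemma Weight.w_zero (wV : Weight V) : wV.w 0 = ⊥ := (wV.eq_bot_iff 0).2 rfl

lemma Weight.w_real (wV : Weight V) {v : V} (hv : v ≠ 0) : ∃ r : ℝ, wV.w v = (r : EReal) :=
  ereal_toReal ((wV.eq_bot_iff v).not.2 hv) (wV.ne_top v)

lemma Weight.sum_le {ι : Type*} (wW : Weight W) (s : Finset ι) (u : ι → W) (B : EReal)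
    (hb : ∀ i ∈ s, wW.w (u i) ≤ B) : wW.w (∑ i ∈ s, u i) ≤ B := by
  classical
  induction s using Finset.induction with
  | empty => simpa [wW.w_zero] using (bot_le : (⊥ : EReal) ≤ B)
  | @insert a s ha ih =>
    rw [Finset.sum_insert ha]
    refine le_trans (wW.add_le _ _) (max_le (hb _ (Finset.mem_insert_self _ _)) ?_)
    exact ih fun i hi => hb i (Finset.mem_insert_of_mem hi)

lemma Weight.sum_real {k : ℕ} (wV : Weight V) (v : Fin k → V) (hv : ∀ i, v i ≠ 0) :
    ∃ r : ℝ, (∑ i, wV.w (v i)) = (r : EReal) := by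
  classical
  induction (Finset.univ : Finset (Fin k)) using Finset.induction with
  | empty => exact ⟨0, by simp⟩
  | @insert a s ha ih =>
    obtain ⟨r, hr⟩ := ih
    obtain ⟨b, hb⟩ := wV.w_real (hv a)
    exact ⟨b + r, by rw [Finset.sum_insert ha, hr, hb]; exact_mod_cast rfl⟩

lemma mwt_apply_le (wV : Weight V) (wW : Weight W) {k : ℕ}
    (T : MultilinearMap ℝ (fun _ : Fin k => V) W) (v : Fin k → V) :
    wW.w (T v) ≤ mwt wV wW T + ∑ i, wV.w (v i) := by
  classical
  by_cases hv : ∀ i, v i ≠ 0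
  · have h1 : wW.w (T v) - ∑ i, wV.w (v i) ≤ mwt wV wW T :=
      le_iSup_of_le v (le_iSup_of_le hv le_rfl)
    obtain ⟨r, hr⟩ := wV.sum_real v hv
    rw [hr] at h1 ⊢
    calc wW.w (T v) = wW.w (T v) - (r : EReal) + (r : EReal) := by
          rw [EReal.sub_add_cancel]
      _ ≤ mwt wV wW T + (r : EReal) := add_le_add_left h1 _
  · push_neg at hv
    obtain ⟨i, hi⟩ := hv
    rw [T.map_coord_zero i hi, wW.w_zero]
    exact bot_le

lemma coeffs_eq_zero {U : Type*} [AddCommGroup U] [Module ℝ U] [FiniteDimensional ℝ U]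
    (N : ℕ) (a : ℕ → U) (h : ∀ t : ℝ, ∑ k ∈ Finset.range (N+1), t^k • a k = 0) :
    ∀ k ∈ Finset.range (N+1), a k = 0 := by
  intro k hk
  rw [← Module.forall_dual_apply_eq_zero_iff ℝ]
  intro φ
  set p : Polynomial ℝ := ∑ j ∈ Finset.range (N+1), Polynomial.monomial j (φ (a j)) with hpdef
  have hp : ∀ t : ℝ, p.eval t = 0 := by
    intro t
    have h2 := congrArg φ (h t)
    simp only [map_sum, map_smul, smul_eq_mul, map_zero] at h2
    rw [hpdef, Polynomial.eval_finset_sum]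
    simp only [Polynomial.eval_monomial]
    rw [← h2]
    exact Finset.sum_congr rfl fun j _ => mul_comm _ _
  have hp0 : p = 0 := Polynomial.funext (fun t => by simp [hp t])
  have h3 := congrArg (fun q => Polynomial.coeff q k) hp0
  simp only [hpdef, Polynomial.finset_sum_coeff, Polynomial.coeff_monomial,
    Polynomial.coeff_zero] at h3
  rwa [Finset.sum_ite_eq' (Finset.range (N+1)) k (fun j => φ (a j)), if_pos hk] at h3

open Finset in
lemma signsum {n : ℕ} (R : Finset (Fin n)) :
    ∑ S ∈ univ.powerset.filter (fun S => R ⊆ S), (-1 : ℤ)^(n - S.card)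
      = if R = univ then 1 else 0 := by
  classical
  have key : ∑ S ∈ univ.powerset.filter (fun S => R ⊆ S), (-1 : ℤ)^(n - S.card)
      = ∑ T ∈ Rᶜ.powerset, (-1 : ℤ)^T.card := by
    refine Finset.sum_nbij' (fun S => Sᶜ) (fun T => Tᶜ) ?_ ?_ ?_ ?_ ?_
    · intro S hS
      simp only [mem_filter, mem_powerset] at hS
      simpa [mem_powerset] using compl_subset_compl.2 hS.2
    · intro T hT
      simp only [mem_powerset] at hT
      simp only [mem_filter, mem_powerset]
      exact ⟨subset_univ _, by simpa using compl_subset_compl.2 hT⟩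
    · intro S _; simp
    · intro T _; simp
    · intro S _
      congr 1
      rw [card_compl]
      simp
  rw [key, Finset.sum_powerset_neg_one_pow_card]
  congr 1
  simp [Finset.compl_eq_empty_iff]

open Finset in
lemma sign_sum_surj {n : ℕ} {ι U : Type*} [Fintype ι] [DecidableEq ι] [AddCommGroup U]
    (ψ : (ι → Fin n) → U) :
    ∑ S ∈ (univ : Finset (Fin n)).powerset,
        (-1 : ℤ)^(n - S.card) • ∑ θ ∈ Fintype.piFinset (fun _ : ι => S), ψ θ
      = ∑ θ ∈ univ.filter (fun θ : ι → Fin n => Function.Surjective θ), ψ θ := by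
  classical
  have h1 : ∀ S : Finset (Fin n),
      Fintype.piFinset (fun _ : ι => S) = univ.filter (fun θ : ι → Fin n => ∀ i, θ i ∈ S) := by
    intro S; ext θ; simp [Fintype.mem_piFinset]
  calc ∑ S ∈ (univ : Finset (Fin n)).powerset,
        (-1 : ℤ)^(n - S.card) • ∑ θ ∈ Fintype.piFinset (fun _ : ι => S), ψ θ
      = ∑ S ∈ (univ : Finset (Fin n)).powerset, ∑ θ ∈ (univ : Finset (ι → Fin n)),
          (-1 : ℤ)^(n - S.card) • (if ∀ i, θ i ∈ S then ψ θ else 0) := by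
        refine Finset.sum_congr rfl fun S _ => ?_
        rw [h1 S, Finset.sum_filter, Finset.smul_sum]
    _ = ∑ θ ∈ (univ : Finset (ι → Fin n)), ∑ S ∈ (univ : Finset (Fin n)).powerset,
          (-1 : ℤ)^(n - S.card) • (if ∀ i, θ i ∈ S then ψ θ else 0) := Finset.sum_comm
    _ = ∑ θ ∈ (univ : Finset (ι → Fin n)),
          (if Function.Surjective θ then ψ θ else 0) := by
        refine Finset.sum_congr rfl fun θ _ => ?_
        have h2 : ∀ S : Finset (Fin n), (∀ i, θ i ∈ S) ↔ Finset.image θ univ ⊆ S := by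
          intro S
          rw [Finset.image_subset_iff]
          simp
        calc ∑ S ∈ (univ : Finset (Fin n)).powerset,
              (-1 : ℤ)^(n - S.card) • (if ∀ i, θ i ∈ S then ψ θ else 0)
            = ∑ S ∈ (univ : Finset (Fin n)).powerset,
              (if Finset.image θ univ ⊆ S then (-1 : ℤ)^(n - S.card) • ψ θ else 0) := by
              refine Finset.sum_congr rfl fun S _ => ?_
              rw [smul_ite, smul_zero]
              congr 1
              · exact propext (h2 S)
          _ = ∑ S ∈ (univ : Finset (Fin n)).powerset.filter
                (fun S => Finset.image θ univ ⊆ S), (-1 : ℤ)^(n - S.card) • ψ θ := by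
              rw [Finset.sum_filter]
          _ = (∑ S ∈ (univ : Finset (Fin n)).powerset.filter
                (fun S => Finset.image θ univ ⊆ S), (-1 : ℤ)^(n - S.card)) • ψ θ := by
              rw [Finset.sum_smul]
          _ = (if Function.Surjective θ then ψ θ else 0) := by
              rw [signsum]
              have h3 : Finset.image θ univ = univ ↔ Function.Surjective θ := by
                constructor
                · intro hI y
                  have : y ∈ Finset.image θ univ := hI ▸ Finset.mem_univ y
                  simpa using this
                · intro hs
                  apply Finset.eq_univ_of_forall
                  intro y
                  obtain ⟨x, hx⟩ := hs y
                  exact Finset.mem_image.2 ⟨x, Finset.mem_univ x, hx⟩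
              by_cases hS : Function.Surjective θ
              · rw [if_pos (h3.2 hS), if_pos hS, one_smul]
              · rw [if_neg (fun hI => hS (h3.1 hI)), if_neg hS, zero_smul]
    _ = ∑ θ ∈ univ.filter (fun θ : ι → Fin n => Function.Surjective θ), ψ θ := by
        rw [Finset.sum_filter]

open Finset in
lemma polarization {n : ℕ} (T : MultilinearMap ℝ (fun _ : Fin n => V) W)
    (hsym : ∀ (σ : Equiv.Perm (Fin n)) (v : Fin n → V), T (v ∘ σ) = T v) (v : Fin n → V) :
    ∑ S ∈ (univ : Finset (Fin n)).powerset, (-1 : ℤ)^(n - S.card) • T (fun _ => ∑ l ∈ S, v l)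
      = (Nat.factorial n) • T v := by
  classical
  have hexp : ∀ S : Finset (Fin n), T (fun _ => ∑ l ∈ S, v l)
      = ∑ θ ∈ Fintype.piFinset (fun _ : Fin n => S), T (fun j => v (θ j)) :=
    fun S => T.map_sum_finset (fun _ l => v l) (fun _ => S)
  simp_rw [hexp]
  rw [sign_sum_surj (fun θ => T (fun j => v (θ j)))]
  have hbij : ∀ θ ∈ (univ : Finset (Fin n → Fin n)).filter
      (fun θ : Fin n → Fin n => Function.Surjective θ), Function.Bijective θ := by
    intro θ hθ
    rw [Finset.mem_filter] at hθ
    exact (Fintype.bijective_iff_surjective_and_card θ).2 ⟨hθ.2, rfl⟩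
  have key : ∑ θ ∈ (univ : Finset (Fin n → Fin n)).filter
        (fun θ : Fin n → Fin n => Function.Surjective θ), T (fun j => v (θ j))
      = ∑ _σ ∈ (univ : Finset (Equiv.Perm (Fin n))), T v := by
    refine Finset.sum_bij (fun θ hθ => Equiv.ofBijective θ (hbij θ hθ)) ?_ ?_ ?_ ?_
    · intro θ hθ; exact Finset.mem_univ _
    · intro θ₁ h₁ θ₂ h₂ heq
      exact congrArg (fun (e : Equiv.Perm (Fin n)) => (e : Fin n → Fin n)) heq
    · intro σ _
      refine ⟨σ, Finset.mem_filter.2 ⟨Finset.mem_univ _, σ.surjective⟩, ?_⟩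
      ext x; rfl
    · intro θ hθ
      have := hsym (Equiv.ofBijective θ (hbij θ hθ)) v
      rw [← this]
      rfl
  rw [key, Finset.sum_const, Finset.card_univ, Fintype.card_perm, Fintype.card_fin]

lemma PolyMap.eval_smul_expand (p : PolyMap V W) (M : ℕ) (hM : p.deg ≤ M) (t : ℝ) (x : V) :
    p.eval (t • x) = ∑ k ∈ Finset.range (M+1), t^k • p.comp k (fun _ => x) := by
  have h1 : ∀ k : ℕ, p.comp k (fun _ : Fin k => t • x) = t^k • p.comp k (fun _ => x) := by
    intro k
    have := (p.comp k).map_smul_univ (fun _ => t) (fun _ => x)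
    simpa [Finset.prod_const] using this
  rw [PolyMap.eval]
  rw [Finset.sum_congr rfl fun k _ => h1 k]
  refine Finset.sum_subset ?_ ?_
  · exact Finset.range_subset_range.2 (by omega)
  · intro k _ hk
    rw [Finset.mem_range, not_lt] at hk
    rw [p.zero_of_gt k (by omega), MultilinearMap.zero_apply, smul_zero]

lemma PolyMap.eval_zero_eq (p : PolyMap V W) (v : Fin 0 → V) :
    p.eval 0 = p.comp 0 v := by
  rw [PolyMap.eval]
  rw [Finset.sum_eq_single_of_mem 0 (Finset.mem_range.2 (by omega))]
  · congr 1
    exact funext fun i => i.elim0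
  · intro k _ hk
    exact (p.comp k).map_coord_zero (⟨0, Nat.pos_of_ne_zero hk⟩ : Fin k) rfl

end helpers


set_option maxHeartbeats 2000000 in
/-- Subadditivity of weights under composition of polynomial maps: if `f` is
subresonant then `ϖ(g ∘ f) ≤ max{ϖ_U(g(0)), ϖ(g) + ϖ(f)}`. -/
theorem pweight_comp_le {V W U : Type*}
    [AddCommGroup V] [Module ℝ V] [FiniteDimensional ℝ V]
    [AddCommGroup W] [Module ℝ W] [FiniteDimensional ℝ W]
    [AddCommGroup U] [Module ℝ U] [FiniteDimensional ℝ U]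
    (wV : Weight V) (wW : Weight W) (wU : Weight U)
    (f : PolyMap V W) (g : PolyMap W U) (hf : pweight wV wW f ≤ 0)
    (h : PolyMap V U) (hcomp : ∀ x : V, h.eval x = g.eval (f.eval x)) :
    pweight wV wU h ≤ max (wU.w (g.eval 0)) (pweight wW wU g + pweight wV wW f) := by
  classical
  set N := max h.deg (g.deg * f.deg) with hN
  -- the homogeneous components of `h` agree on the diagonal with those of `g ∘ f`
  have key : ∀ x : V, ∀ n ∈ Finset.range (N+1), h.comp n (fun _ => x)
      = ∑ m ∈ Finset.range (g.deg+1),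
          ∑ κ ∈ (Fintype.piFinset (fun _ : Fin m => Finset.range (f.deg+1))).filter
              (fun κ => ∑ i, κ i = n),
            g.comp m (fun i => f.comp (κ i) (fun _ => x)) := by
    intro x
    have hmain : ∀ t : ℝ, ∑ k ∈ Finset.range (N+1),
        t^k • (h.comp k (fun _ => x) - ∑ m ∈ Finset.range (g.deg+1),
          ∑ κ ∈ (Fintype.piFinset (fun _ : Fin m => Finset.range (f.deg+1))).filter
              (fun κ => ∑ i, κ i = k),
            g.comp m (fun i => f.comp (κ i) (fun _ => x))) = 0 := by
      intro t
      have hL : h.eval (t • x) = ∑ k ∈ Finset.range (N+1), t^k • h.comp k (fun _ => x) :=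
        h.eval_smul_expand N (le_max_left _ _) t x
      have hR : g.eval (f.eval (t • x)) = ∑ k ∈ Finset.range (N+1),
          t^k • ∑ m ∈ Finset.range (g.deg+1),
            ∑ κ ∈ (Fintype.piFinset (fun _ : Fin m => Finset.range (f.deg+1))).filter
                (fun κ => ∑ i, κ i = k),
              g.comp m (fun i => f.comp (κ i) (fun _ => x)) := by
        rw [f.eval_smul_expand f.deg le_rfl t x, PolyMap.eval]
        have hterm : ∀ m, g.comp m
            (fun _ => ∑ k ∈ Finset.range (f.deg+1), t^k • f.comp k (fun _ => x))
            = ∑ κ ∈ Fintype.piFinset (fun _ : Fin m => Finset.range (f.deg+1)),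
                t^(∑ i, κ i) • g.comp m (fun i => f.comp (κ i) (fun _ => x)) := by
          intro m
          rw [(g.comp m).map_sum_finset (fun _ k => t^k • f.comp k (fun _ => x))
            (fun _ => Finset.range (f.deg+1))]
          refine Finset.sum_congr rfl fun κ _ => ?_
          rw [(g.comp m).map_smul_univ (fun i => t^(κ i))
            (fun i => f.comp (κ i) (fun _ => x)), Finset.prod_pow_eq_pow_sum]
        rw [Finset.sum_congr rfl fun m _ => hterm m]
        have hfib : ∀ m ∈ Finset.range (g.deg+1),
            ∑ κ ∈ Fintype.piFinset (fun _ : Fin m => Finset.range (f.deg+1)),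
                t^(∑ i, κ i) • g.comp m (fun i => f.comp (κ i) (fun _ => x))
            = ∑ k ∈ Finset.range (N+1),
                ∑ κ ∈ (Fintype.piFinset (fun _ : Fin m => Finset.range (f.deg+1))).filter
                    (fun κ => ∑ i, κ i = k),
                  t^(∑ i, κ i) • g.comp m (fun i => f.comp (κ i) (fun _ => x)) := by
          intro m hm
          refine (Finset.sum_fiberwise_of_maps_to ?_ _).symm
          intro κ hκ
          rw [Finset.mem_range] at hm ⊢
          have hbd : ∀ i, κ i ≤ f.deg := fun i => by
            have := Fintype.mem_piFinset.1 hκ i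
            rw [Finset.mem_range] at this; omega
          calc ∑ i, κ i ≤ ∑ _i : Fin m, f.deg := Finset.sum_le_sum fun i _ => hbd i
            _ = m * f.deg := by simp [Finset.sum_const, mul_comm]
            _ ≤ g.deg * f.deg := Nat.mul_le_mul_right _ (by omega)
            _ ≤ N := le_max_right _ _
            _ < N + 1 := by omega
        rw [Finset.sum_congr rfl hfib, Finset.sum_comm]
        refine Finset.sum_congr rfl fun k _ => ?_
        rw [Finset.smul_sum]
        refine Finset.sum_congr rfl fun m _ => ?_
        rw [Finset.smul_sum]
        refine Finset.sum_congr rfl fun κ hκ => ?_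
        rw [(Finset.mem_filter.1 hκ).2]
      have hEq := hcomp (t • x)
      rw [hL, hR] at hEq
      calc ∑ k ∈ Finset.range (N+1), t^k • (h.comp k (fun _ => x) - _)
          = (∑ k ∈ Finset.range (N+1), t^k • h.comp k (fun _ => x))
            - ∑ k ∈ Finset.range (N+1), t^k • ∑ m ∈ Finset.range (g.deg+1),
              ∑ κ ∈ (Fintype.piFinset (fun _ : Fin m => Finset.range (f.deg+1))).filter
                  (fun κ => ∑ i, κ i = k),
                g.comp m (fun i => f.comp (κ i) (fun _ => x)) := by
            rw [← Finset.sum_sub_distrib]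
            exact Finset.sum_congr rfl fun k _ => smul_sub _ _ _
        _ = 0 := by rw [hEq, sub_self]
    intro n hn
    have := coeffs_eq_zero N _ hmain n hn
    exact sub_eq_zero.1 this
  -- now bound each component
  refine iSup_le fun n => ?_
  rcases Nat.eq_zero_or_pos n with hn0 | hnpos
  · -- degree 0 component
    subst hn0
    refine iSup_le fun v => iSup_le fun _ => ?_
    have h0 : h.comp 0 v = g.eval (f.eval 0) := by
      rw [← h.eval_zero_eq v, hcomp 0]
    have hempty : (∑ i : Fin 0, wV.w (v i)) = 0 := by simp
    rw [h0, hempty, sub_zero]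
    have hfW : wW.w (f.eval 0) ≤ pweight wV wW f := by
      rw [f.eval_zero_eq (fun i => i.elim0)]
      have h1 : wW.w (f.comp 0 (fun i => i.elim0)) - (∑ i : Fin 0, wV.w (i.elim0))
          ≤ mwt wV wW (f.comp 0) :=
        le_iSup_of_le (fun i => i.elim0) (le_iSup_of_le (fun i => i.elim0) le_rfl)
      have h2 : (∑ i : Fin 0, wV.w (i.elim0)) = 0 := by simp
      rw [h2, sub_zero] at h1
      exact le_trans h1 (le_iSup (fun k => mwt wV wW (f.comp k)) 0)
    rw [PolyMap.eval]
    refine wU.sum_le _ _ _ fun m _ => ?_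
    rcases Nat.eq_zero_or_pos m with rfl | hmpos
    · have hg0 : g.comp 0 (fun _ => f.eval 0) = g.eval 0 := (g.eval_zero_eq _).symm
      rw [hg0]
      exact le_max_left _ _
    · refine le_trans (mwt_apply_le wW wU (g.comp m) (fun _ => f.eval 0))
        (le_trans ?_ (le_max_right _ _))
      refine add_le_add (le_iSup (fun k => mwt wW wU (g.comp k)) m) ?_
      exact ereal_sum_le_single (by omega) _ _ (fun _ => le_trans hfW hf) (fun _ => hfW)
  · by_cases hnN : n ≤ N
    · -- main case : 1 ≤ n ≤ N
      refine iSup_le fun v => iSup_le fun hv => ?_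
      obtain ⟨s, hs⟩ := wV.sum_real v hv
      rw [hs, EReal.sub_le_iff_le_add (Or.inl (EReal.coe_ne_bot s))
        (Or.inl (EReal.coe_ne_top s))]
      have hfac : wU.w (h.comp n v) = wU.w ((Nat.factorial n) • h.comp n v) := by
        rw [← Nat.cast_smul_eq_nsmul ℝ (Nat.factorial n) (h.comp n v),
          wU.smul_eq _ (by exact_mod_cast Nat.factorial_ne_zero n)]
      rw [hfac, ← polarization (h.comp n) (h.symm n) v]
      have hkey : ∀ S : Finset (Fin n), h.comp n (fun _ => ∑ l ∈ S, v l)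
          = ∑ m ∈ Finset.range (g.deg+1),
              ∑ κ ∈ (Fintype.piFinset (fun _ : Fin m => Finset.range (f.deg+1))).filter
                  (fun κ => ∑ i, κ i = n),
                g.comp m (fun i => f.comp (κ i) (fun _ => ∑ l ∈ S, v l)) :=
        fun S => key _ n (Finset.mem_range.2 (by omega))
      -- expand each inner evaluation as a sum over assignments of variables
      have hexp2 : ∀ (S : Finset (Fin n)) (m : ℕ) (κ : Fin m → ℕ),
          g.comp m (fun i => f.comp (κ i) (fun _ => ∑ l ∈ S, v l))
          = ∑ θ ∈ Fintype.piFinset (fun _ : ((i : Fin m) × Fin (κ i)) => S),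
              g.comp m (fun i => f.comp (κ i) (fun j => v (θ ⟨i, j⟩))) := by
        intro S m κ
        have e1 : (fun i => f.comp (κ i) (fun _ => ∑ l ∈ S, v l))
            = fun i => ∑ r ∈ Fintype.piFinset (fun _ : Fin (κ i) => S),
                f.comp (κ i) (fun j => v (r j)) :=
          funext fun i => (f.comp (κ i)).map_sum_finset (fun _ l => v l) (fun _ => S)
        rw [e1, (g.comp m).map_sum_finset
          (fun i (r : Fin (κ i) → Fin n) => f.comp (κ i) (fun j => v (r j)))
          (fun i => Fintype.piFinset (fun _ : Fin (κ i) => S))]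
        refine Finset.sum_nbij' (fun ρ => fun p => ρ p.1 p.2)
          (fun θ => fun i j => θ ⟨i, j⟩) ?_ ?_ ?_ ?_ ?_
        · intro ρ hρ
          refine Fintype.mem_piFinset.2 fun p => ?_
          exact Fintype.mem_piFinset.1 (Fintype.mem_piFinset.1 hρ p.1) p.2
        · intro θ hθ
          refine Fintype.mem_piFinset.2 fun i => Fintype.mem_piFinset.2 fun j => ?_
          exact Fintype.mem_piFinset.1 hθ ⟨i, j⟩
        · intro ρ _; rfl
        · intro θ _; rfl
        · intro ρ _; rfl
      have hbig : ∑ S ∈ (Finset.univ : Finset (Fin n)).powerset,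
          (-1 : ℤ)^(n - S.card) • (h.comp n (fun _ => ∑ l ∈ S, v l))
          = ∑ m ∈ Finset.range (g.deg+1),
              ∑ κ ∈ (Fintype.piFinset (fun _ : Fin m => Finset.range (f.deg+1))).filter
                  (fun κ => ∑ i, κ i = n),
                ∑ θ ∈ Finset.univ.filter
                    (fun θ : ((i : Fin m) × Fin (κ i)) → Fin n => Function.Surjective θ),
                  g.comp m (fun i => f.comp (κ i) (fun j => v (θ ⟨i, j⟩))) := by
        calc ∑ S ∈ (Finset.univ : Finset (Fin n)).powerset,
            (-1 : ℤ)^(n - S.card) • (h.comp n (fun _ => ∑ l ∈ S, v l))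
            = ∑ S ∈ (Finset.univ : Finset (Fin n)).powerset,
              ∑ m ∈ Finset.range (g.deg+1),
                ∑ κ ∈ (Fintype.piFinset (fun _ : Fin m => Finset.range (f.deg+1))).filter
                    (fun κ => ∑ i, κ i = n),
                  (-1 : ℤ)^(n - S.card) •
                    ∑ θ ∈ Fintype.piFinset (fun _ : ((i : Fin m) × Fin (κ i)) => S),
                      g.comp m (fun i => f.comp (κ i) (fun j => v (θ ⟨i, j⟩))) := by
              refine Finset.sum_congr rfl fun S _ => ?_
              rw [hkey S, Finset.smul_sum]
              refine Finset.sum_congr rfl fun m _ => ?_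
              rw [Finset.smul_sum]
              exact Finset.sum_congr rfl fun κ _ => by rw [hexp2 S m κ]
          _ = ∑ m ∈ Finset.range (g.deg+1),
              ∑ S ∈ (Finset.univ : Finset (Fin n)).powerset,
                ∑ κ ∈ (Fintype.piFinset (fun _ : Fin m => Finset.range (f.deg+1))).filter
                    (fun κ => ∑ i, κ i = n),
                  (-1 : ℤ)^(n - S.card) •
                    ∑ θ ∈ Fintype.piFinset (fun _ : ((i : Fin m) × Fin (κ i)) => S),
                      g.comp m (fun i => f.comp (κ i) (fun j => v (θ ⟨i, j⟩))) :=
              Finset.sum_comm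
          _ = ∑ m ∈ Finset.range (g.deg+1),
              ∑ κ ∈ (Fintype.piFinset (fun _ : Fin m => Finset.range (f.deg+1))).filter
                  (fun κ => ∑ i, κ i = n),
                ∑ S ∈ (Finset.univ : Finset (Fin n)).powerset,
                  (-1 : ℤ)^(n - S.card) •
                    ∑ θ ∈ Fintype.piFinset (fun _ : ((i : Fin m) × Fin (κ i)) => S),
                      g.comp m (fun i => f.comp (κ i) (fun j => v (θ ⟨i, j⟩))) :=
              Finset.sum_congr rfl fun m _ => Finset.sum_comm
          _ = ∑ m ∈ Finset.range (g.deg+1),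
              ∑ κ ∈ (Fintype.piFinset (fun _ : Fin m => Finset.range (f.deg+1))).filter
                  (fun κ => ∑ i, κ i = n),
                ∑ θ ∈ Finset.univ.filter
                    (fun θ : ((i : Fin m) × Fin (κ i)) → Fin n => Function.Surjective θ),
                  g.comp m (fun i => f.comp (κ i) (fun j => v (θ ⟨i, j⟩))) :=
              Finset.sum_congr rfl fun m _ => Finset.sum_congr rfl fun κ _ => by
                apply sign_sum_surj
      rw [hbig]
      -- now bound the weight of the triple sum
      refine wU.sum_le _ _ _ fun m hm => ?_
      refine wU.sum_le _ _ _ fun κ hκ => ?_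
      refine wU.sum_le _ _ _ fun θ hθ => ?_
      have hsurj : Function.Surjective θ := (Finset.mem_filter.1 hθ).2
      have hκn : ∑ i, κ i = n := (Finset.mem_filter.1 hκ).2
      have hcard : Fintype.card ((i : Fin m) × Fin (κ i)) = n := by
        rw [Fintype.card_sigma]
        simpa using hκn
      have hbij : Function.Bijective θ :=
        (Fintype.bijective_iff_surjective_and_card θ).2 ⟨hsurj, by simp [hcard]⟩
      have hm0 : m ≠ 0 := by
        rintro rfl
        have : Fintype.card ((i : Fin 0) × Fin (κ i)) = 0 := by simp
        omega
      calc wU.w (g.comp m (fun i => f.comp (κ i) (fun j => v (θ ⟨i, j⟩))))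
          ≤ mwt wW wU (g.comp m)
            + ∑ i, wW.w (f.comp (κ i) (fun j => v (θ ⟨i, j⟩))) :=
            mwt_apply_le wW wU (g.comp m) _
        _ ≤ mwt wW wU (g.comp m)
            + ∑ i, (mwt wV wW (f.comp (κ i)) + ∑ j, wV.w (v (θ ⟨i, j⟩))) := by
            exact add_le_add_right (Finset.sum_le_sum fun i _ => mwt_apply_le wV wW _ _) _
        _ = mwt wW wU (g.comp m) + ((∑ i, mwt wV wW (f.comp (κ i)))
            + ∑ i, ∑ j, wV.w (v (θ ⟨i, j⟩))) := by
            rw [Finset.sum_add_distrib]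
        _ ≤ pweight wW wU g + (pweight wV wW f + ∑ i, ∑ j, wV.w (v (θ ⟨i, j⟩))) := by
            refine add_le_add (le_iSup (fun k => mwt wW wU (g.comp k)) m)
              (add_le_add_left ?_ _)
            exact ereal_sum_le_single hm0 _ _
              (fun i => le_trans (le_iSup (fun k => mwt wV wW (f.comp k)) (κ i)) hf)
              (fun i => le_iSup (fun k => mwt wV wW (f.comp k)) (κ i))
        _ = pweight wW wU g + (pweight wV wW f + (s : EReal)) := by
            congr 2
            calc ∑ i, ∑ j, wV.w (v (θ ⟨i, j⟩))
                = ∑ p : ((i : Fin m) × Fin (κ i)), wV.w (v (θ p)) := by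
                  rw [← Finset.univ_sigma_univ, Finset.sum_sigma]
              _ = ∑ l, wV.w (v l) := hbij.sum_comp (fun l => wV.w (v l))
              _ = (s : EReal) := hs
        _ ≤ max (wU.w (g.eval 0)) (pweight wW wU g + pweight wV wW f) + (s : EReal) := by
            rw [← add_assoc]
            exact add_le_add_left (le_max_right _ _) _
    · -- n > N : the component vanishes
      refine iSup_le fun v => iSup_le fun hv => ?_
      rw [h.zero_of_gt n (by have := le_max_left h.deg (g.deg * f.deg); omega),
        MultilinearMap.zero_apply, wU.w_zero, EReal.bot_sub]
      exact bot_le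
end

section
/- Let V and W have compatible weights with values λ_1 < ... < λ_ℓ < 0 and let f: V → W be subresonant (ϖ(f) ≤ 0). Then for every x ∈ V and every i, f(x + V_{≤λ_i}) ⊆ f(x) + W_{≤λ_i}; that is, f maps each coset of V_{≤λ_i} into a single coset of W_{≤λ_i}. -/
private lemma weight_sum_le {W : Type*} [AddCommGroup W] [Module ℝ W] (wW : Weight W)
    {α : Type*} (s : Finset α) (g : α → W) (c : EReal)
    (h : ∀ i ∈ s, wW.w (g i) ≤ c) : wW.w (∑ i ∈ s, g i) ≤ c := by
  classical
  induction s using Finset.cons_induction with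
  | empty =>
    have h0 : wW.w 0 = ⊥ := (wW.eq_bot_iff 0).mpr rfl
    simpa [h0] using (bot_le : (⊥ : EReal) ≤ c)
  | cons a s ha ih =>
    rw [Finset.sum_cons]
    exact le_trans (wW.add_le _ _)
      (max_le (h a (by simp)) (ih fun i hi => h i (by simp [hi])))

private lemma sum_exists_real {α : Type*} (s : Finset α) (g : α → EReal)
    (h : ∀ i ∈ s, ∃ r : ℝ, g i = (r : EReal)) :
    ∃ r : ℝ, ∑ i ∈ s, g i = (r : EReal) := by
  classical
  induction s using Finset.cons_induction with
  | empty => exact ⟨0, by simp⟩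
  | cons a s ha ih =>
    obtain ⟨r, hr⟩ := h a (by simp)
    obtain ⟨r', hr'⟩ := ih fun i hi => h i (by simp [hi])
    exact ⟨r + r', by rw [Finset.sum_cons, hr, hr']; push_cast; ring⟩

/-- A subresonant polynomial map intertwines the linear foliations determined
by the filtrations: `f(x + V_{≤λᵢ}) ⊆ f(x) + W_{≤λᵢ}`. -/
theorem subresonant_preserves_linear_foliations {V W : Type*}
    [AddCommGroup V] [Module ℝ V] [FiniteDimensional ℝ V]
    [AddCommGroup W] [Module ℝ W] [FiniteDimensional ℝ W]
    (wV : Weight V) (wW : Weight W)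
    (hnegV : ∀ v : V, v ≠ 0 → wV.w v < 0)
    (hnegW : ∀ x : W, x ≠ 0 → wW.w x < 0)
    (hc : Compatible wV wW)
    (f : PolyMap V W) (hf : pweight wV wW f ≤ 0)
    (l : ℝ) (hval : ∃ v : V, wV.w v = (l : EReal))
    (x u : V) (hu : wV.w u ≤ (l : EReal)) :
    wW.w (f.eval (x + u) - f.eval x) ≤ (l : EReal) := by
  classical
  by_cases hu0 : u = 0
  · have : f.eval (x + u) - f.eval x = 0 := by rw [hu0, add_zero, sub_self]
    rw [this, (wW.eq_bot_iff 0).mpr rfl]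
    exact bot_le
  have hune : wV.w u < 0 := hnegV u hu0
  -- expand the evaluation using multilinearity
  have hexp : ∀ k : ℕ, f.comp k (fun _ => x + u) =
      f.comp k (fun _ => x) +
        ∑ s ∈ (Finset.univ : Finset (Finset (Fin k))).erase ∅,
          f.comp k (s.piecewise (fun _ => u) (fun _ => x)) := by
    intro k
    have h1 : (fun _ : Fin k => x + u)
        = (fun _ : Fin k => u) + (fun _ : Fin k => x) := by
      funext i; simp [add_comm]
    rw [h1, MultilinearMap.map_add_univ]
    rw [← Finset.add_sum_erase (Finset.univ : Finset (Finset (Fin k)))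
      (fun s => f.comp k (s.piecewise (fun _ => u) (fun _ => x)))
      (Finset.mem_univ ∅)]
    simp [Finset.piecewise_empty]
  have hdiff : f.eval (x + u) - f.eval x =
      ∑ k ∈ Finset.range (f.deg + 1),
        ∑ s ∈ (Finset.univ : Finset (Finset (Fin k))).erase ∅,
          f.comp k (s.piecewise (fun _ => u) (fun _ => x)) := by
    unfold PolyMap.eval
    rw [← Finset.sum_sub_distrib]
    refine Finset.sum_congr rfl fun k _ => ?_
    rw [hexp k]; exact add_sub_cancel_left _ _
  rw [hdiff]
  refine weight_sum_le wW _ _ _ fun k _ => ?_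
  refine weight_sum_le wW _ _ _ fun s hs => ?_
  have hsne : s ≠ ∅ := (Finset.mem_erase.mp hs).1
  obtain ⟨i₀, hi₀⟩ := Finset.nonempty_iff_ne_empty.mpr hsne
  set v : Fin k → V := s.piecewise (fun _ => u) (fun _ => x) with hv
  by_cases hz : ∀ i, v i ≠ 0
  · -- all coordinates nonzero: use the weight bound
    have h1 : wW.w (f.comp k v) - ∑ i, wV.w (v i) ≤ mwt wV wW (f.comp k) :=
      le_iSup₂_of_le v hz le_rfl
    have h2 : mwt wV wW (f.comp k) ≤ pweight wV wW f := le_iSup (fun k => mwt wV wW (f.comp k)) k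
    have h3 : wW.w (f.comp k v) - ∑ i, wV.w (v i) ≤ 0 := h1.trans (h2.trans hf)
    obtain ⟨r, hr⟩ := sum_exists_real Finset.univ (fun i => wV.w (v i)) (by
      intro i _
      have hne := hz i
      have hb : wV.w (v i) ≠ ⊥ := fun h => hne ((wV.eq_bot_iff _).mp h)
      have ht : wV.w (v i) ≠ ⊤ := wV.ne_top _
      exact ⟨(wV.w (v i)).toReal, (EReal.coe_toReal ht hb).symm⟩)
    have h4 : wW.w (f.comp k v) ≤ ∑ i, wV.w (v i) := by
      rw [hr] at h3 ⊢
      have := add_le_add_right h3 (r : EReal)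
      rwa [add_comm (r : EReal), EReal.sub_add_cancel, add_zero] at this
    refine h4.trans ?_
    -- bound the sum of weights by l
    rw [← Finset.add_sum_erase (Finset.univ : Finset (Fin k))
      (fun i => wV.w (v i)) (Finset.mem_univ i₀)]
    have hvi₀ : v i₀ = u := by simp [hv, Finset.piecewise_eq_of_mem _ _ _ hi₀]
    have hrest : ∑ i ∈ Finset.univ.erase i₀, wV.w (v i) ≤ 0 :=
      Finset.sum_nonpos fun i _ => le_of_lt (hnegV (v i) (hz i))
    calc wV.w (v i₀) + ∑ i ∈ Finset.univ.erase i₀, wV.w (v i)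
        ≤ (l : EReal) + 0 := add_le_add (by rw [hvi₀]; exact hu) hrest
      _ = (l : EReal) := add_zero _
  · -- some coordinate is zero: the term vanishes
    push_neg at hz
    obtain ⟨i, hi⟩ := hz
    rw [(f.comp k).map_coord_zero i hi, (wW.eq_bot_iff 0).mpr rfl]
    exact bot_le
end

section
/- Let V and W be finite-dimensional vector spaces with compatible weights taking only negative values, and let f: V → W be a subresonant polynomial map such that the derivative D_0f: V → W is invertible. Then f is a polynomial diffeomorphism and its inverse f^{−1}: W → V is also a subresonant polynomial map. -/
/-! ### Auxiliary machinery -/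

namespace Weight
variable {V : Type*} [AddCommGroup V] [Module ℝ V] (wV : Weight V)

lemma w_zero_s12 : wV.w 0 = ⊥ := (wV.eq_bot_iff 0).mpr rfl

lemma w_neg (v : V) : wV.w (-v) = wV.w v := by
  have := wV.smul_eq (-1) (by norm_num) v
  simpa using this

lemma w_sub_le (v u : V) : wV.w (v - u) ≤ max (wV.w v) (wV.w u) := by
  rw [sub_eq_add_neg]
  simpa [wV.w_neg] using wV.add_le v (-u)

lemma w_sum_le {ι : Type*} {s : Finset ι} {g : ι → V} {c : EReal}
    (hc : ∀ i ∈ s, wV.w (g i) ≤ c) : wV.w (∑ i ∈ s, g i) ≤ c := by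
  induction s using Finset.cons_induction with
  | empty => rw [Finset.sum_empty, wV.w_zero_s12]; exact bot_le
  | cons i s hi ih =>
    rw [Finset.sum_cons]
    exact le_trans (wV.add_le _ _)
      (max_le (hc i (Finset.mem_cons_self i s)) (ih fun j hj => hc j (Finset.mem_cons_of_mem hj)))

end Weight

lemma EReal.sum_coe' {ι : Type*} (s : Finset ι) (g : ι → ℝ) :
    (∑ i ∈ s, ((g i : EReal))) = ((∑ i ∈ s, g i : ℝ) : EReal) := by
  induction s using Finset.cons_induction with
  | empty => simp
  | cons i s hi ih => simp [Finset.sum_cons, ih]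

/-- The pointwise form of subresonance of a multilinear map, valid for all
argument tuples (if some argument vanishes, both sides are `⊥`-trivial). -/
def SubRes {V W : Type*} [AddCommGroup V] [Module ℝ V]
    [AddCommGroup W] [Module ℝ W] (wV : Weight V) (wW : Weight W)
    {ι : Type*} [Fintype ι] (T : MultilinearMap ℝ (fun _ : ι => V) W) : Prop :=
  ∀ v : ι → V, wW.w (T v) ≤ ∑ i, wV.w (v i)

section SubResLemmas
variable {V W : Type*} [AddCommGroup V] [Module ℝ V]
    [AddCommGroup W] [Module ℝ W] {wV : Weight V} {wW : Weight W}

lemma mwt_le_zero {k : ℕ} {T : MultilinearMap ℝ (fun _ : Fin k => V) W}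
    (h : SubRes wV wW T) : mwt wV wW T ≤ 0 := by
  refine iSup₂_le fun v hv => ?_
  exact EReal.sub_le_of_le_add' (by simpa using h v)

lemma subres_of_mwt_le_zero {k : ℕ} {T : MultilinearMap ℝ (fun _ : Fin k => V) W}
    (h : mwt wV wW T ≤ 0) : SubRes wV wW T := by
  intro v
  by_cases hv : ∀ i, v i ≠ 0
  · have h1 : wW.w (T v) - ∑ i, wV.w (v i) ≤ 0 := by
      refine le_trans ?_ h
      exact le_iSup₂ (f := fun v (_ : ∀ i, v i ≠ 0) => wW.w (T v) - ∑ i, wV.w (v i)) v hv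
    have hr : (∑ i, wV.w (v i)) = ((∑ i, (wV.w (v i)).toReal : ℝ) : EReal) := by
      rw [← EReal.sum_coe']
      exact Finset.sum_congr rfl fun i _ =>
        (EReal.coe_toReal (wV.ne_top _) (fun hb => hv i ((wV.eq_bot_iff _).mp hb))).symm
    rw [hr] at h1 ⊢
    calc wW.w (T v) = wW.w (T v) - ((∑ i, (wV.w (v i)).toReal : ℝ) : EReal)
          + ((∑ i, (wV.w (v i)).toReal : ℝ) : EReal) := EReal.sub_add_cancel.symm
      _ ≤ 0 + _ := add_le_add_left h1 _
      _ = _ := zero_add _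
  · push_neg at hv
    obtain ⟨i, hi⟩ := hv
    rw [T.map_coord_zero i hi, wW.w_zero_s12]
    exact bot_le

lemma subres_comp_of_pweight {p : PolyMap V W} (h : pweight wV wW p ≤ 0) (k : ℕ) :
    SubRes wV wW (p.comp k) :=
  subres_of_mwt_le_zero (le_trans (le_iSup (fun k => mwt wV wW (p.comp k)) k) h)

lemma pweight_le_zero {p : PolyMap V W} (h : ∀ k, SubRes wV wW (p.comp k)) :
    pweight wV wW p ≤ 0 :=
  iSup_le fun k => mwt_le_zero (h k)

end SubResLemmas

namespace PolyMap
variable {U V W : Type*} [AddCommGroup U] [Module ℝ U] [AddCommGroup V] [Module ℝ V]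
  [AddCommGroup W] [Module ℝ W]

lemma eval_eq_sum {p : PolyMap V W} {n : ℕ} (h : p.deg < n) (x : V) :
    p.eval x = ∑ k ∈ Finset.range n, p.comp k (fun _ => x) := by
  refine Finset.sum_subset (Finset.range_subset_range.mpr h) fun k _ hk => ?_
  rw [p.zero_of_gt k (by simpa using hk)]
  rfl

/-- zero polynomial map -/
def pzero : PolyMap V W where
  deg := 0
  comp _ := 0
  symm _ _ _ := rfl
  zero_of_gt _ _ := rfl

@[simp] lemma eval_pzero (x : V) : (pzero : PolyMap V W).eval x = 0 := by
  simp [eval, pzero]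

lemma subres_pzero (wV : Weight V) (wW : Weight W) (k : ℕ) :
    SubRes wV wW ((pzero : PolyMap V W).comp k) := by
  intro v
  rw [show (pzero : PolyMap V W).comp k v = 0 from rfl, wW.w_zero_s12]
  exact bot_le

/-- sum of polynomial maps -/
def padd (p q : PolyMap V W) : PolyMap V W where
  deg := max p.deg q.deg
  comp k := p.comp k + q.comp k
  symm k σ v := by simp [p.symm k σ v, q.symm k σ v]
  zero_of_gt k h := by
    show p.comp k + q.comp k = 0
    rw [p.zero_of_gt k (lt_of_le_of_lt (le_max_left _ _) h),
      q.zero_of_gt k (lt_of_le_of_lt (le_max_right _ _) h), add_zero]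

lemma eval_padd (p q : PolyMap V W) (x : V) :
    (padd p q).eval x = p.eval x + q.eval x := by
  rw [eval_eq_sum (p := p) (n := max p.deg q.deg + 1) (by omega) x,
    eval_eq_sum (p := q) (n := max p.deg q.deg + 1) (by omega) x,
    ← Finset.sum_add_distrib]
  rfl

lemma subres_padd {wV : Weight V} {wW : Weight W} {p q : PolyMap V W}
    (hp : ∀ k, SubRes wV wW (p.comp k)) (hq : ∀ k, SubRes wV wW (q.comp k)) (k : ℕ) :
    SubRes wV wW ((padd p q).comp k) := by
  intro v
  have : (padd p q).comp k v = p.comp k v + q.comp k v := rfl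
  rw [this]
  exact le_trans (wW.add_le _ _) (max_le (hp k v) (hq k v))

/-- negation -/
def pneg (p : PolyMap V W) : PolyMap V W where
  deg := p.deg
  comp k := -p.comp k
  symm k σ v := by simp [p.symm k σ v]
  zero_of_gt k h := by
    show -p.comp k = 0
    rw [p.zero_of_gt k h, neg_zero]

lemma eval_pneg (p : PolyMap V W) (x : V) : (pneg p).eval x = -p.eval x := by
  rw [eval, eval, show (pneg p).deg = p.deg from rfl, ← Finset.sum_neg_distrib]
  rfl

lemma subres_pneg {wV : Weight V} {wW : Weight W} {p : PolyMap V W}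
    (hp : ∀ k, SubRes wV wW (p.comp k)) (k : ℕ) : SubRes wV wW ((pneg p).comp k) := by
  intro v
  have : (pneg p).comp k v = -(p.comp k v) := rfl
  rw [this, wW.w_neg]
  exact hp k v

/-- constant polynomial map -/
def pconst (c : W) : PolyMap V W where
  deg := 0
  comp k := match k with
    | 0 => MultilinearMap.constOfIsEmpty ℝ _ c
    | _ + 1 => 0
  symm k σ v := by match k with
    | 0 => rfl
    | n + 1 => rfl
  zero_of_gt k h := by match k with
    | n + 1 => rfl

lemma eval_pconst (c : W) (x : V) : (pconst c : PolyMap V W).eval x = c := by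
  simp [eval, pconst]

lemma subres_pconst {wV : Weight V} {wW : Weight W} {c : W} (hcw : wW.w c ≤ 0) (k : ℕ) :
    SubRes wV wW ((pconst c : PolyMap V W).comp k) := by
  intro v
  match k with
  | 0 => show wW.w c ≤ ∑ i, wV.w (v i); simpa using hcw
  | n + 1 =>
    rw [show (pconst c : PolyMap V W).comp (n+1) v = 0 from rfl, wW.w_zero_s12]
    exact bot_le

/-- polynomial map from a linear map -/
def ofLinear (L : V →ₗ[ℝ] W) : PolyMap V W where
  deg := 1
  comp k := match k with
    | 1 => MultilinearMap.ofSubsingleton ℝ V W (0 : Fin 1) L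
    | 0 => 0
    | _ + 2 => 0
  symm k σ v := by match k with
    | 0 => rfl
    | 1 =>
      show L (v (σ 0)) = L (v 0)
      rw [Subsingleton.elim (σ 0) 0]
    | n + 2 => rfl
  zero_of_gt k h := by match k with
    | n + 2 => rfl

lemma eval_ofLinear (L : V →ₗ[ℝ] W) (x : V) : (ofLinear L).eval x = L x := by
  show (0 : MultilinearMap ℝ (fun _ : Fin 0 => V) W) _ + (L x + 0) = L x
  simp

lemma subres_ofLinear {wV : Weight V} {wW : Weight W} {L : V →ₗ[ℝ] W}
    (h : ∀ v, wW.w (L v) ≤ wV.w v) (k : ℕ) : SubRes wV wW ((ofLinear L).comp k) := by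
  intro v
  match k with
  | 0 =>
    rw [show (ofLinear L).comp 0 v = 0 from rfl, wW.w_zero_s12]; exact bot_le
  | 1 => show wW.w (L (v 0)) ≤ ∑ i, wV.w (v i); simpa using h (v 0)
  | n + 2 =>
    rw [show (ofLinear L).comp (n+2) v = 0 from rfl, wW.w_zero_s12]; exact bot_le

/-- postcomposition with a linear map -/
def lcomp (L : W →ₗ[ℝ] U) (p : PolyMap V W) : PolyMap V U where
  deg := p.deg
  comp k := L.compMultilinearMap (p.comp k)
  symm k σ v := by
    show L (p.comp k (v ∘ σ)) = L (p.comp k v)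
    rw [p.symm k σ v]
  zero_of_gt k h := by
    show L.compMultilinearMap (p.comp k) = 0
    rw [p.zero_of_gt k h]
    ext v
    simp

lemma eval_lcomp (L : W →ₗ[ℝ] U) (p : PolyMap V W) (x : V) :
    (lcomp L p).eval x = L (p.eval x) := by
  rw [eval, eval, show (lcomp L p).deg = p.deg from rfl, map_sum]
  rfl

lemma subres_lcomp {wV : Weight V} {wW : Weight W} {wU : Weight U} {L : W →ₗ[ℝ] U}
    {p : PolyMap V W} (hL : ∀ u, wU.w (L u) ≤ wW.w u)
    (hp : ∀ k, SubRes wV wW (p.comp k)) (k : ℕ) : SubRes wV wU ((lcomp L p).comp k) := by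
  intro v
  exact le_trans (hL _) (hp k v)

/-- kill the constant and linear part -/
def trunc (p : PolyMap V W) : PolyMap V W where
  deg := p.deg
  comp k := if k ≤ 1 then 0 else p.comp k
  symm k σ v := by
    by_cases h : k ≤ 1 <;> simp [h, p.symm k σ v]
  zero_of_gt k h := by
    by_cases h' : k ≤ 1 <;> simp [h', p.zero_of_gt k h]

lemma trunc_comp_zero (p : PolyMap V W) : (trunc p).comp 0 = 0 := rfl
lemma trunc_comp_one (p : PolyMap V W) : (trunc p).comp 1 = 0 := rfl

lemma subres_trunc {wV : Weight V} {wW : Weight W} {p : PolyMap V W}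
    (hp : ∀ k, SubRes wV wW (p.comp k)) (k : ℕ) : SubRes wV wW ((trunc p).comp k) := by
  intro v
  by_cases h : k ≤ 1
  · have : (trunc p).comp k v = 0 := by simp [trunc, h]
    rw [this, wW.w_zero_s12]; exact bot_le
  · have : (trunc p).comp k v = p.comp k v := by simp [trunc, h]
    rw [this]; exact hp k v

end PolyMap

section SigmaComp
variable {U V W : Type*} [AddCommGroup U] [Module ℝ U] [AddCommGroup V] [Module ℝ V]
  [AddCommGroup W] [Module ℝ W]

variable {j : ℕ} {m : Fin j → ℕ}

lemma sigma_update_eq (G : ∀ i : Fin j, MultilinearMap ℝ (fun _ : Fin (m i) => U) V)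
    [DecidableEq (Σ i : Fin j, Fin (m i))]
    (v : (Σ i : Fin j, Fin (m i)) → U) (i₀ : Fin j) (t₀ : Fin (m i₀)) (z : U) :
    (fun i => G i fun t => Function.update v ⟨i₀, t₀⟩ z ⟨i, t⟩)
      = Function.update (fun i => G i fun t => v ⟨i, t⟩) i₀
          (G i₀ (Function.update (fun t => v ⟨i₀, t⟩) t₀ z)) := by
  funext i
  by_cases hi : i = i₀
  · subst hi
    rw [Function.update_self]
    congr 1
    funext t
    by_cases ht : t = t₀
    · subst ht; rw [Function.update_self, Function.update_self]
    · have h1 : (⟨i, t⟩ : Σ i : Fin j, Fin (m i)) ≠ ⟨i, t₀⟩ :=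
        fun hc => ht (eq_of_heq (Sigma.mk.inj_iff.mp hc).2)
      rw [Function.update_of_ne ht, Function.update_of_ne h1]
  · rw [Function.update_of_ne hi]
    congr 1
    funext t
    have h1 : (⟨i, t⟩ : Σ i : Fin j, Fin (m i)) ≠ ⟨i₀, t₀⟩ :=
      fun hc => hi (congrArg Sigma.fst hc)
    rw [Function.update_of_ne h1]

/-- Plugging multilinear maps into each slot of a multilinear map, giving a
multilinear map indexed by a sigma type. -/
def sigmaComp (F : MultilinearMap ℝ (fun _ : Fin j => V) W)
    (G : ∀ i : Fin j, MultilinearMap ℝ (fun _ : Fin (m i) => U) V) :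
    MultilinearMap ℝ (fun _ : (Σ i : Fin j, Fin (m i)) => U) W where
  toFun v := F fun i => G i fun t => v ⟨i, t⟩
  map_update_add' := by
    intro dec v s x y
    obtain ⟨i₀, t₀⟩ := s
    simp only [sigma_update_eq G v i₀ t₀]
    rw [(G i₀).map_update_add, F.map_update_add]
  map_update_smul' := by
    intro dec v s c x
    obtain ⟨i₀, t₀⟩ := s
    simp only [sigma_update_eq G v i₀ t₀]
    rw [(G i₀).map_update_smul, F.map_update_smul]

@[simp] lemma sigmaComp_apply (F : MultilinearMap ℝ (fun _ : Fin j => V) W)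
    (G : ∀ i : Fin j, MultilinearMap ℝ (fun _ : Fin (m i) => U) V)
    (v : (Σ i : Fin j, Fin (m i)) → U) :
    sigmaComp F G v = F fun i => G i fun t => v ⟨i, t⟩ := rfl

lemma subres_sigmaComp {wU : Weight U} {wV : Weight V} {wW : Weight W}
    {F : MultilinearMap ℝ (fun _ : Fin j => V) W}
    {G : ∀ i : Fin j, MultilinearMap ℝ (fun _ : Fin (m i) => U) V}
    (hF : SubRes wV wW F) (hG : ∀ i, SubRes wU wV (G i)) :
    SubRes wU wW (sigmaComp F G) := by
  intro v
  refine le_trans (hF _) ?_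
  rw [← Finset.univ_sigma_univ, Finset.sum_sigma]
  exact Finset.sum_le_sum fun i _ => hG i _
end SigmaComp

section SubResMore
variable {U W : Type*} [AddCommGroup U] [Module ℝ U] [AddCommGroup W] [Module ℝ W]
  {wU : Weight U} {wW : Weight W}

lemma subres_domDomCongr {ι ι' : Type*} [Fintype ι] [Fintype ι'] (e : ι ≃ ι')
    {T : MultilinearMap ℝ (fun _ : ι => U) W} (h : SubRes wU wW T) :
    SubRes wU wW (T.domDomCongr e) := by
  intro v
  refine le_trans (h _) (le_of_eq ?_)
  exact Equiv.sum_comp e (fun s => wU.w (v s))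

lemma subres_zero_map {ι : Type*} [Fintype ι] :
    SubRes wU wW (0 : MultilinearMap ℝ (fun _ : ι => U) W) := by
  intro v
  rw [MultilinearMap.zero_apply, wW.w_zero_s12]
  exact bot_le
end SubResMore

namespace PolyMap
variable {U V W : Type*} [AddCommGroup U] [Module ℝ U] [AddCommGroup V] [Module ℝ V]
  [AddCommGroup W] [Module ℝ W]

/-- A single "block" of the composition of two polynomial maps. -/
noncomputable def blockMap (p : PolyMap V W) (q : PolyMap U V) (j : ℕ) (m : Fin j → ℕ) :
    MultilinearMap ℝ (fun _ : Fin (∑ i, m i) => U) W :=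
  (sigmaComp (p.comp j) (fun i => q.comp (m i))).domDomCongr
    (Fintype.equivFinOfCardEq (by simp))

/-- The block, transported to a given arity `k` (or zero). -/
noncomputable def blockMapK (p : PolyMap V W) (q : PolyMap U V) (j : ℕ) (m : Fin j → ℕ)
    (k : ℕ) : MultilinearMap ℝ (fun _ : Fin k => U) W :=
  if h : (∑ i, m i) = k then (blockMap p q j m).domDomCongr (finCongr h) else 0

/-- The (non-symmetrized) arity-`k` component of a composition. -/
noncomputable def rawComp (p : PolyMap V W) (q : PolyMap U V) (k : ℕ) :
    MultilinearMap ℝ (fun _ : Fin k => U) W :=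
  ∑ j ∈ Finset.range (p.deg + 1),
    ∑ m ∈ Fintype.piFinset (fun _ : Fin j => Finset.range (q.deg + 1)),
      blockMapK p q j m k

lemma rawComp_eq_zero (p : PolyMap V W) (q : PolyMap U V) {k : ℕ}
    (h : p.deg * q.deg < k) : rawComp p q k = 0 := by
  refine Finset.sum_eq_zero fun j hj => Finset.sum_eq_zero fun m hm => ?_
  have hmi : ∀ i, m i ≤ q.deg := by
    intro i
    have := (Fintype.mem_piFinset.mp hm) i
    simpa [Nat.lt_succ_iff] using this
  have hsum : (∑ i, m i) ≤ p.deg * q.deg := by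
    calc (∑ i, m i) ≤ ∑ _i : Fin j, q.deg := Finset.sum_le_sum fun i _ => hmi i
      _ = j * q.deg := by simp [Finset.sum_const, mul_comm]
      _ ≤ p.deg * q.deg := Nat.mul_le_mul_right _ (by simpa [Nat.lt_succ_iff] using hj)
  rw [blockMapK, dif_neg (by omega)]

/-- Composition of polynomial maps. -/
noncomputable def pcomp (p : PolyMap V W) (q : PolyMap U V) : PolyMap U W where
  deg := p.deg * q.deg
  comp k := ((k.factorial : ℝ)⁻¹) • ∑ σ : Equiv.Perm (Fin k), (rawComp p q k).domDomCongr σ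
  symm k τ v := by
    simp only [MultilinearMap.smul_apply, MultilinearMap.sum_apply,
      MultilinearMap.domDomCongr_apply]
    congr 1
    exact Fintype.sum_equiv (Equiv.mulLeft τ) _ _ (fun σ => rfl)
  zero_of_gt k h := by
    show ((k.factorial : ℝ)⁻¹) • ∑ σ : Equiv.Perm (Fin k), (rawComp p q k).domDomCongr σ = 0
    rw [rawComp_eq_zero p q h]
    have hz : ∀ σ : Equiv.Perm (Fin k),
        (0 : MultilinearMap ℝ (fun _ : Fin k => U) W).domDomCongr σ = 0 := fun σ => by
      ext v; rfl
    rw [Finset.sum_congr rfl (fun σ _ => hz σ), Finset.sum_const, smul_zero, smul_zero]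

lemma blockMapK_apply_const (p : PolyMap V W) (q : PolyMap U V) (j : ℕ) (m : Fin j → ℕ)
    (k : ℕ) (x : U) :
    blockMapK p q j m k (fun _ => x)
      = if (∑ i, m i) = k then p.comp j (fun i => q.comp (m i) fun _ => x) else 0 := by
  rw [blockMapK]
  by_cases h : (∑ i, m i) = k
  · rw [dif_pos h, if_pos h]; rfl
  · rw [dif_neg h, if_neg h]; rfl

lemma pcomp_comp_apply_const (p : PolyMap V W) (q : PolyMap U V) (k : ℕ) (x : U) :
    (pcomp p q).comp k (fun _ => x) = rawComp p q k (fun _ => x) := by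
  show ((k.factorial : ℝ)⁻¹) • (∑ σ : Equiv.Perm (Fin k), (rawComp p q k).domDomCongr σ)
      (fun _ => x) = _
  rw [MultilinearMap.sum_apply]
  have : ∀ σ : Equiv.Perm (Fin k),
      (rawComp p q k).domDomCongr σ (fun _ => x) = rawComp p q k (fun _ => x) := fun σ => rfl
  rw [Finset.sum_congr rfl (fun σ _ => this σ), Finset.sum_const, Finset.card_univ,
    Fintype.card_perm, Fintype.card_fin, ← Nat.cast_smul_eq_nsmul ℝ, smul_smul,
    inv_mul_cancel₀ (by exact_mod_cast Nat.factorial_ne_zero k), one_smul]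

lemma eval_pcomp (p : PolyMap V W) (q : PolyMap U V) (x : U) :
    (pcomp p q).eval x = p.eval (q.eval x) := by
  have step1 : (pcomp p q).eval x
      = ∑ k ∈ Finset.range (p.deg * q.deg + 1), rawComp p q k (fun _ => x) := by
    rw [eval]
    exact Finset.sum_congr rfl fun k _ => pcomp_comp_apply_const p q k x
  rw [step1]
  have step2 : ∀ k, rawComp p q k (fun _ => x)
      = ∑ j ∈ Finset.range (p.deg + 1),
          ∑ m ∈ Fintype.piFinset (fun _ : Fin j => Finset.range (q.deg + 1)),
            (if (∑ i, m i) = k then p.comp j (fun i => q.comp (m i) fun _ => x) else 0) := by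
    intro k
    rw [rawComp, MultilinearMap.sum_apply]
    refine Finset.sum_congr rfl fun j _ => ?_
    rw [MultilinearMap.sum_apply]
    exact Finset.sum_congr rfl fun m _ => blockMapK_apply_const p q j m k x
  simp only [step2]
  rw [Finset.sum_comm]
  refine Finset.sum_congr rfl fun j hj => ?_
  rw [Finset.sum_comm]
  have step3 : ∀ m ∈ Fintype.piFinset (fun _ : Fin j => Finset.range (q.deg + 1)),
      (∑ k ∈ Finset.range (p.deg * q.deg + 1),
        if (∑ i, m i) = k then p.comp j (fun i => q.comp (m i) fun _ => x) else 0)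
      = p.comp j (fun i => q.comp (m i) fun _ => x) := by
    intro m hm
    rw [Finset.sum_ite_eq]
    have hmi : ∀ i, m i ≤ q.deg := by
      intro i
      have := (Fintype.mem_piFinset.mp hm) i
      simpa [Nat.lt_succ_iff] using this
    have hsum : (∑ i, m i) ≤ p.deg * q.deg := by
      calc (∑ i, m i) ≤ ∑ _i : Fin j, q.deg := Finset.sum_le_sum fun i _ => hmi i
        _ = j * q.deg := by simp [Finset.sum_const, mul_comm]
        _ ≤ p.deg * q.deg :=
          Nat.mul_le_mul_right _ (by simpa [Nat.lt_succ_iff] using hj)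
    rw [if_pos (by simpa [Nat.lt_succ_iff] using hsum)]
  rw [Finset.sum_congr rfl step3,
    ← MultilinearMap.map_sum_finset (p.comp j) (g := fun (i : Fin j) (n : ℕ) => q.comp n (fun _ => x))
      (A := fun _ => Finset.range (q.deg + 1))]
  have : (fun _ : Fin j => q.eval x)
      = fun i => ∑ n ∈ Finset.range (q.deg + 1), q.comp n (fun _ => x) := by
    funext i; rfl
  rw [← this]

lemma subres_pcomp {wU : Weight U} {wV : Weight V} {wW : Weight W}
    {p : PolyMap V W} {q : PolyMap U V}
    (hp : ∀ k, SubRes wV wW (p.comp k)) (hq : ∀ k, SubRes wU wV (q.comp k)) (k : ℕ) :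
    SubRes wU wW ((pcomp p q).comp k) := by
  have hraw : SubRes wU wW (rawComp p q k) := by
    intro v
    rw [rawComp, MultilinearMap.sum_apply]
    refine wW.w_sum_le fun j _ => ?_
    rw [MultilinearMap.sum_apply]
    refine wW.w_sum_le fun m _ => ?_
    have hbk : SubRes wU wW (blockMapK p q j m k) := by
      rw [blockMapK]
      by_cases h : (∑ i, m i) = k
      · rw [dif_pos h]
        exact subres_domDomCongr _
          (subres_domDomCongr _ (subres_sigmaComp (hp j) (fun i => hq (m i))))
      · rw [dif_neg h]
        exact subres_zero_map
    exact hbk v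
  intro v
  show wW.w (((k.factorial : ℝ)⁻¹) •
    (∑ σ : Equiv.Perm (Fin k), (rawComp p q k).domDomCongr σ) v) ≤ _
  rw [wW.smul_eq _ (by positivity)]
  rw [MultilinearMap.sum_apply]
  exact wW.w_sum_le fun σ _ => subres_domDomCongr σ hraw v

end PolyMap

section Analytic
variable {V W : Type*} [AddCommGroup V] [Module ℝ V] [AddCommGroup W] [Module ℝ W]

/-- A weight on a finite-dimensional space taking negative values is bounded
above by a negative real and below by a real (on nonzero vectors). -/
lemma Weight.exists_bounds [FiniteDimensional ℝ V] (wV : Weight V)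
    (hneg : ∀ v : V, v ≠ 0 → wV.w v < 0) :
    ∃ M μ : ℝ, M < 0 ∧ (∀ v : V, wV.w v ≤ (M : EReal)) ∧
      (∀ v : V, v ≠ 0 → (μ : EReal) ≤ wV.w v) := by
  classical
  set S : Set EReal := wV.w '' {v | v ≠ 0} with hS
  have hmono : ∀ l l' : S, (l : EReal) < (l' : EReal) →
      Module.finrank ℝ (sublevel wV l) < Module.finrank ℝ (sublevel wV l') := by
    rintro ⟨l, hl⟩ ⟨l', hl'⟩ hlt
    obtain ⟨v', hv', hv'e⟩ := hl'
    refine Submodule.finrank_lt_finrank_of_lt (SetLike.lt_iff_le_and_exists.mpr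
      ⟨fun u hu => le_trans hu (le_of_lt hlt), v', ?_, ?_⟩)
    · exact le_of_eq hv'e
    · intro hmem
      have h1 : wV.w v' ≤ l := hmem
      have : l' < l' := by
        calc l' = wV.w v' := hv'e.symm
          _ ≤ l := h1
          _ < l' := hlt
      exact lt_irrefl _ this
  have hfin : S.Finite := by
    have hinj : Function.Injective
        (fun l : S => (⟨Module.finrank ℝ (sublevel wV l),
          Nat.lt_succ_of_le (Submodule.finrank_le _)⟩ : Fin (Module.finrank ℝ V + 1))) := by
      intro l l' h
      have h' : Module.finrank ℝ (sublevel wV l) = Module.finrank ℝ (sublevel wV l') :=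
        congrArg Fin.val h
      by_contra hne
      rcases lt_or_gt_of_ne (fun hc => hne (Subtype.ext hc)) with hlt | hlt
      · exact absurd h' (Nat.ne_of_lt (hmono _ _ hlt))
      · exact absurd h'.symm (Nat.ne_of_lt (hmono _ _ hlt))
    have : Finite S := Finite.of_injective _ hinj
    exact Set.finite_coe_iff.mp this
  by_cases hne : S.Nonempty
  · have htf : hfin.toFinset.Nonempty := Set.Finite.toFinset_nonempty hfin |>.mpr hne
    set M₀ := hfin.toFinset.max' htf with hM₀
    set μ₀ := hfin.toFinset.min' htf with hμ₀
    have hM₀S : M₀ ∈ S := (Set.Finite.mem_toFinset hfin).mp (hfin.toFinset.max'_mem htf)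
    have hμ₀S : μ₀ ∈ S := (Set.Finite.mem_toFinset hfin).mp (hfin.toFinset.min'_mem htf)
    obtain ⟨vM, hvM, hvMe⟩ := hM₀S
    obtain ⟨vμ, hvμ, hvμe⟩ := hμ₀S
    have hM₀top : M₀ ≠ ⊤ := by rw [← hvMe]; exact wV.ne_top vM
    have hM₀bot : M₀ ≠ ⊥ := by
      rw [← hvMe]; intro hb; exact hvM ((wV.eq_bot_iff vM).mp hb)
    have hμ₀top : μ₀ ≠ ⊤ := by rw [← hvμe]; exact wV.ne_top vμ
    have hμ₀bot : μ₀ ≠ ⊥ := by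
      rw [← hvμe]; intro hb; exact hvμ ((wV.eq_bot_iff vμ).mp hb)
    refine ⟨M₀.toReal, μ₀.toReal, ?_, ?_, ?_⟩
    · have : M₀ < 0 := by rw [← hvMe]; exact hneg vM hvM
      rw [← EReal.coe_toReal hM₀top hM₀bot] at this
      exact_mod_cast this
    · intro v
      rw [EReal.coe_toReal hM₀top hM₀bot]
      by_cases hv : v = 0
      · rw [hv, wV.w_zero_s12]; exact bot_le
      · exact hfin.toFinset.le_max' _ ((Set.Finite.mem_toFinset hfin).mpr ⟨v, hv, rfl⟩)
    · intro v hv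
      rw [EReal.coe_toReal hμ₀top hμ₀bot]
      exact hfin.toFinset.min'_le _ ((Set.Finite.mem_toFinset hfin).mpr ⟨v, hv, rfl⟩)
  · refine ⟨-1, 0, by norm_num, ?_, ?_⟩
    · intro v
      by_cases hv : v = 0
      · rw [hv, wV.w_zero_s12]; exact bot_le
      · exact absurd ⟨v, hv, rfl⟩ (fun h => hne ⟨_, h⟩)
    · intro v hv
      exact absurd ⟨v, hv, rfl⟩ (fun h => hne ⟨_, h⟩)

/-- The inverse of a weight-nonincreasing bijective linear map between
compatibly weighted spaces is weight-nonincreasing. -/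
lemma dinv_weight [FiniteDimensional ℝ V] [FiniteDimensional ℝ W]
    (wV : Weight V) (wW : Weight W) (hc : Compatible wV wW)
    (D : V →ₗ[ℝ] W) (hD : Function.Bijective D) (hDw : ∀ v, wW.w (D v) ≤ wV.w v) :
    ∀ u : W, wV.w ((LinearEquiv.ofBijective D hD).symm u) ≤ wW.w u := by
  intro u
  set l := wW.w u with hl
  have hmap : ∀ v ∈ sublevel wV l, D v ∈ sublevel wW l := fun v hv => le_trans (hDw v) hv
  have hinj : Function.Injective (D.restrict hmap) := by
    intro a b hab
    exact Subtype.ext (hD.1 (congrArg Subtype.val hab))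
  have hsurj : Function.Surjective (D.restrict hmap) :=
    (LinearMap.injective_iff_surjective_of_finrank_eq_finrank (hc.2 l)).mp hinj
  obtain ⟨v, hv⟩ := hsurj ⟨u, le_refl l⟩
  have h1 : D v.val = u := congrArg Subtype.val hv
  have h2 : (LinearEquiv.ofBijective D hD).symm u = v.val := by
    rw [← h1]
    exact (LinearEquiv.ofBijective D hD).symm_apply_apply v.val
  rw [h2]
  exact v.2

/-- Key estimate: a subresonant polynomial map with no constant/linear part
contracts weights by at least `M`. -/
lemma key_estimate {wV : Weight V} {wW : Weight W} {N : PolyMap V W}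
    (hs : ∀ k, SubRes wV wW (N.comp k)) (hN0 : N.comp 0 = 0) (hN1 : N.comp 1 = 0)
    {M : ℝ} (hM : M < 0) (hMb : ∀ v : V, wV.w v ≤ (M : EReal)) (a d : V) :
    wW.w (N.eval (a + d) - N.eval a) ≤ (M : EReal) + wV.w d := by
  classical
  have hsplit : N.eval (a + d) - N.eval a
      = ∑ k ∈ Finset.range (N.deg + 1),
          (N.comp k (fun _ => a + d) - N.comp k (fun _ => a)) := by
    rw [PolyMap.eval, PolyMap.eval, Finset.sum_sub_distrib]
  rw [hsplit]
  refine wW.w_sum_le fun k _hk => ?_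
  match k with
  | 0 =>
    rw [hN0]
    show wW.w ((0:W) - 0) ≤ _
    rw [sub_zero, wW.w_zero_s12]; exact bot_le
  | 1 =>
    rw [hN1]
    show wW.w ((0:W) - 0) ≤ _
    rw [sub_zero, wW.w_zero_s12]; exact bot_le
  | (k+2) =>
    set T := N.comp (k+2) with hT
    have hadd : (fun _ : Fin (k+2) => a + d)
        = (fun _ : Fin (k+2) => d) + (fun _ : Fin (k+2) => a) := by
      funext i; show a + d = d + a; rw [add_comm]
    rw [hadd, T.map_add_univ]
    rw [← Finset.add_sum_erase _ _ (Finset.mem_univ (∅ : Finset (Fin (k+2))))]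
    rw [show (∅ : Finset (Fin (k+2))).piecewise (fun _ => d) (fun _ => a) = fun _ => a from
      Finset.piecewise_empty _ _]
    rw [add_sub_cancel_left]
    refine wW.w_sum_le fun s hsmem => ?_
    have hsne : s ≠ ∅ := (Finset.mem_erase.mp hsmem).1
    obtain ⟨i₀, hi₀⟩ := Finset.nonempty_iff_ne_empty.mpr hsne
    refine le_trans (hs (k+2) _) ?_
    rw [← Finset.add_sum_erase _ _ (Finset.mem_univ i₀)]
    have hpc : s.piecewise (fun _ => d) (fun _ => a) i₀ = d := Finset.piecewise_eq_of_mem _ _ _ hi₀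
    rw [hpc]
    have hrest : ∑ i ∈ Finset.univ.erase i₀,
        wV.w (s.piecewise (fun _ => d) (fun _ => a) i) ≤ (M : EReal) := by
      refine le_trans (Finset.sum_le_card_nsmul _ _ (M : EReal) fun i _ => ?_) ?_
      · by_cases h : i ∈ s
        · rw [Finset.piecewise_eq_of_mem _ _ _ h]; exact hMb d
        · rw [Finset.piecewise_eq_of_notMem _ _ _ h]; exact hMb a
      · rw [Finset.card_erase_of_mem (Finset.mem_univ i₀), Finset.card_univ, Fintype.card_fin]
        rw [← EReal.coe_nsmul]
        have : ((k + 2 - 1) • M : ℝ) ≤ M := by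
          rw [nsmul_eq_mul]
          have hk1 : (1 : ℝ) ≤ ((k + 2 - 1 : ℕ) : ℝ) := by
            norm_num
          nlinarith
        exact_mod_cast this
    calc wV.w d + ∑ i ∈ Finset.univ.erase i₀,
          wV.w (s.piecewise (fun _ => d) (fun _ => a) i)
        ≤ wV.w d + (M : EReal) := add_le_add_right hrest _
      _ = (M : EReal) + wV.w d := add_comm _ _

end Analytic
/-- A subresonant polynomial map with invertible derivative at `0` is a
(polynomial) diffeomorphism whose inverse is again a subresonant polynomial
map. -/
theorem subresonant_invertible {V W : Type*}
    [AddCommGroup V] [Module ℝ V] [FiniteDimensional ℝ V]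
    [AddCommGroup W] [Module ℝ W] [FiniteDimensional ℝ W]
    (wV : Weight V) (wW : Weight W)
    (hnegV : ∀ v : V, v ≠ 0 → wV.w v < 0)
    (hnegW : ∀ x : W, x ≠ 0 → wW.w x < 0)
    (hc : Compatible wV wW)
    (f : PolyMap V W) (hf : pweight wV wW f ≤ 0)
    (hD : Function.Bijective (fun v : V => f.comp 1 (fun _ => v))) :
    Function.Bijective f.eval ∧
      ∃ g : PolyMap W V, pweight wW wV g ≤ 0 ∧
        (∀ x : V, g.eval (f.eval x) = x) ∧ (∀ y : W, f.eval (g.eval y) = y) := by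
  classical
  obtain ⟨M, μ, hM, hMb, hμb⟩ := wV.exists_bounds hnegV
  have hW0 : ∀ u : W, wW.w u ≤ 0 := by
    intro u
    by_cases hu : u = 0
    · rw [hu, wW.w_zero_s12]; exact bot_le
    · exact le_of_lt (hnegW u hu)
  have hV0 : ∀ v : V, wV.w v ≤ 0 := by
    intro v
    by_cases hv : v = 0
    · rw [hv, wV.w_zero_s12]; exact bot_le
    · exact le_of_lt (hnegV v hv)
  set Dlin : V →ₗ[ℝ] W := (MultilinearMap.ofSubsingleton ℝ V W (0 : Fin 1)).symm (f.comp 1)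
    with hDlin
  have hDbij : Function.Bijective Dlin := hD
  have hsub_f : ∀ k, SubRes wV wW (f.comp k) := subres_comp_of_pweight hf
  have hDw : ∀ v, wW.w (Dlin v) ≤ wV.w v := by
    intro v
    have h1 := hsub_f 1 (fun _ => v)
    show wW.w (f.comp 1 (fun _ => v)) ≤ _
    simpa using h1
  set Deq := LinearEquiv.ofBijective Dlin hDbij with hDeq
  have hDinvw : ∀ u, wV.w (Deq.symm u) ≤ wW.w u := dinv_weight wV wW hc Dlin hDbij hDw
  set c : W := f.comp 0 (fun _ => 0) with hc0
  have hcw : wW.w c ≤ 0 := by simpa using hsub_f 0 (fun _ => 0)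
  set N := PolyMap.trunc f with hN
  have hsub_N : ∀ k, SubRes wV wW (N.comp k) := PolyMap.subres_trunc hsub_f
  have hNE : ∀ a d : V, wW.w (N.eval (a + d) - N.eval a) ≤ (M : EReal) + wV.w d :=
    key_estimate hsub_N rfl rfl hM hMb
  have hN0eval : N.eval 0 = 0 := by
    show (∑ k ∈ Finset.range (N.deg + 1), N.comp k (fun _ => (0 : V))) = 0
    refine Finset.sum_eq_zero fun k _hk => ?_
    match k with
    | 0 => rfl
    | k + 1 => exact (N.comp (k + 1)).map_coord_zero 0 rfl
  -- decomposition f = c + D + N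
  have hdecomp : ∀ x : V, f.eval x = c + Dlin x + N.eval x := by
    intro x
    have hpt : ∀ k, f.comp k (fun _ => x)
        = (if k ≤ 1 then f.comp k (fun _ => x) else 0) + N.comp k (fun _ => x) := by
      intro k
      by_cases h : k ≤ 1
      · have : N.comp k (fun _ => x) = 0 := by
          show (if k ≤ 1 then 0 else f.comp k) (fun _ => x) = 0
          rw [if_pos h]; rfl
        rw [if_pos h, this, add_zero]
      · have : N.comp k (fun _ => x) = f.comp k (fun _ => x) := by
          show (if k ≤ 1 then 0 else f.comp k) (fun _ => x) = _
          rw [if_neg h]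
        rw [if_neg h, this, zero_add]
    have h1 : f.eval x = (∑ k ∈ Finset.range (f.deg + 1),
        (if k ≤ 1 then f.comp k (fun _ => x) else 0)) + N.eval x := by
      show (∑ k ∈ Finset.range (f.deg + 1), f.comp k (fun _ => x)) = _ + (∑ k ∈ Finset.range (N.deg + 1), N.comp k (fun _ => x))
      have hdeg : N.deg = f.deg := rfl
      rw [hdeg, ← Finset.sum_add_distrib]
      exact Finset.sum_congr rfl fun k _ => hpt k
    have h2 : (∑ k ∈ Finset.range (f.deg + 1),
        (if k ≤ 1 then f.comp k (fun _ => x) else 0)) = c + Dlin x := by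
      have hbig : ∀ n, f.deg < n → (∑ k ∈ Finset.range (f.deg + 1),
          (if k ≤ 1 then f.comp k (fun _ => x) else 0))
          = ∑ k ∈ Finset.range n, (if k ≤ 1 then f.comp k (fun _ => x) else 0) := by
        intro n hn
        refine Finset.sum_subset (Finset.range_subset_range.mpr hn) fun k _ hk => ?_
        have hkd : f.deg < k := by simpa using hk
        by_cases h : k ≤ 1
        · rw [if_pos h, f.zero_of_gt k hkd]; rfl
        · rw [if_neg h]
      have hc2 : (∑ k ∈ Finset.range 2, (if k ≤ 1 then f.comp k (fun _ => x) else 0))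
          = ∑ k ∈ Finset.range (max (f.deg + 1) 2),
            (if k ≤ 1 then f.comp k (fun _ => x) else 0) := by
        refine Finset.sum_subset (Finset.range_subset_range.mpr (le_max_right _ _)) fun k _ hk => ?_
        have : ¬ k ≤ 1 := by simpa [Nat.lt_succ_iff] using hk
        rw [if_neg this]
      rw [hbig (max (f.deg + 1) 2) (by omega), ← hc2]
      rw [Finset.sum_range_succ, Finset.sum_range_one]
      rw [if_pos (by norm_num), if_pos (by norm_num)]
      have h0 : f.comp 0 (fun _ => x) = c := congrArg (f.comp 0) (funext fun i => i.elim0)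
      rw [h0]
      rfl
    rw [h1, h2]
  -- the iteration
  set Phi : PolyMap W V → PolyMap W V := fun φ =>
    PolyMap.lcomp Deq.symm.toLinearMap
      (PolyMap.padd (PolyMap.ofLinear (LinearMap.id))
        (PolyMap.padd (PolyMap.pconst (-c)) (PolyMap.pneg (PolyMap.pcomp N φ)))) with hPhi
  set φs : ℕ → PolyMap W V := fun n => Nat.rec PolyMap.pzero (fun _ ih => Phi ih) n with hφs
  have hφs_succ : ∀ n, φs (n + 1) = Phi (φs n) := fun n => rfl
  have hPhi_eval : ∀ φ y, (Phi φ).eval y = Deq.symm (y - c - N.eval (φ.eval y)) := by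
    intro φ y
    rw [hPhi]
    rw [PolyMap.eval_lcomp, PolyMap.eval_padd, PolyMap.eval_ofLinear, PolyMap.eval_padd,
      PolyMap.eval_pconst, PolyMap.eval_pneg, PolyMap.eval_pcomp]
    show Deq.symm _ = _
    congr 1
    show y + (-c + -(N.eval (φ.eval y))) = y - c - N.eval (φ.eval y)
    abel
  have hsubφ : ∀ n k, SubRes wW wV ((φs n).comp k) := by
    intro n
    induction n with
    | zero => exact PolyMap.subres_pzero wW wV
    | succ n ih =>
      rw [hφs_succ]
      refine PolyMap.subres_lcomp hDinvw
        (PolyMap.subres_padd (PolyMap.subres_ofLinear fun u => le_of_eq rfl)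
          (PolyMap.subres_padd (PolyMap.subres_pconst (by rw [wW.w_neg]; exact hcw))
            (PolyMap.subres_pneg (PolyMap.subres_pcomp hsub_N ih))))
  -- merging coercion arithmetic
  have hcast : ∀ n : ℕ, (M : EReal) + (((n : ℝ) * M : ℝ) : EReal)
      = ((((n + 1 : ℕ) : ℝ) * M : ℝ) : EReal) := by
    intro n
    rw [← EReal.coe_add]
    congr 1
    push_cast
    ring
  -- the delta estimate
  have hδ : ∀ n y, wV.w ((φs (n + 1)).eval y - (φs n).eval y) ≤ (((n : ℝ) * M : ℝ) : EReal) := by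
    intro n
    induction n with
    | zero =>
      intro y
      have hφ0 : φs 0 = PolyMap.pzero := rfl
      rw [hφs_succ, hPhi_eval, hφ0, PolyMap.eval_pzero, hN0eval, sub_zero, sub_zero]
      refine le_trans (hDinvw _) (le_trans (wW.w_sub_le y c) ?_)
      refine le_trans (max_le (hW0 y) (hW0 c)) ?_
      norm_num
    | succ n ih =>
      intro y
      have h1 : (φs (n + 2)).eval y - (φs (n + 1)).eval y
          = Deq.symm (N.eval ((φs n).eval y) - N.eval ((φs (n + 1)).eval y)) := by
        rw [hφs_succ (n+1), hφs_succ n, hPhi_eval, hPhi_eval, ← map_sub]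
        congr 1
        abel
      have harg : (φs (n + 1)).eval y
          = (φs n).eval y + ((φs (n + 1)).eval y - (φs n).eval y) := by abel
      rw [h1]
      refine le_trans (hDinvw _) ?_
      have h2 : N.eval ((φs n).eval y) - N.eval ((φs (n + 1)).eval y)
          = -(N.eval ((φs n).eval y + ((φs (n + 1)).eval y - (φs n).eval y))
              - N.eval ((φs n).eval y)) := by
        rw [← harg]; abel
      rw [h2, wW.w_neg]
      refine le_trans (hNE _ _) ?_
      rw [← hcast n]
      exact add_le_add_right (ih y) _
  -- the error estimate
  have he : ∀ n x, wV.w ((φs n).eval (f.eval x) - x) ≤ (((n : ℝ) * M : ℝ) : EReal) := by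
    intro n
    induction n with
    | zero =>
      intro x
      show wV.w ((PolyMap.pzero).eval (f.eval x) - x) ≤ _
      rw [PolyMap.eval_pzero, zero_sub, wV.w_neg]
      refine le_trans (hV0 x) ?_
      norm_num
    | succ n ih =>
      intro x
      set e := (φs n).eval (f.eval x) - x with he'
      have harg : (φs n).eval (f.eval x) = x + e := by rw [he']; abel
      have h1 : f.eval x - c - N.eval ((φs n).eval (f.eval x))
          = Dlin x + (N.eval x - N.eval (x + e)) := by
        rw [harg, hdecomp x]; abel
      have h2 : (φs (n + 1)).eval (f.eval x) - x
          = Deq.symm (N.eval x - N.eval (x + e)) := by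
        rw [hφs_succ, hPhi_eval, h1, map_add]
        have h3 : Deq.symm (Dlin x) = x := by
          have h4 : Deq x = Dlin x := rfl
          rw [← h4, LinearEquiv.symm_apply_apply]
        rw [h3]
        abel
      rw [h2]
      refine le_trans (hDinvw _) ?_
      have h5 : N.eval x - N.eval (x + e) = -(N.eval (x + e) - N.eval x) := by abel
      rw [h5, wW.w_neg]
      refine le_trans (hNE x e) ?_
      rw [← hcast n]
      exact add_le_add_right (ih x) _
  -- pick n₀ with n₀ * M < μ
  obtain ⟨n₀, hn₀⟩ := exists_nat_gt (μ / M)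
  have hlt : (n₀ : ℝ) * M < μ := by
    have h1 := mul_lt_mul_of_neg_right hn₀ hM
    rw [div_mul_cancel₀ μ (ne_of_lt hM)] at h1
    exact h1
  have hzero : ∀ v : V, wV.w v ≤ (((n₀ : ℝ) * M : ℝ) : EReal) → v = 0 := by
    intro v hv
    by_contra h
    have h1 : (μ : EReal) ≤ (((n₀ : ℝ) * M : ℝ) : EReal) := le_trans (hμb v h) hv
    have h2 : ¬ (μ : EReal) ≤ (((n₀ : ℝ) * M : ℝ) : EReal) := by
      exact_mod_cast not_le.mpr hlt
    exact h2 h1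
  set g := φs n₀ with hg
  have hgf : ∀ x, g.eval (f.eval x) = x := fun x => sub_eq_zero.mp (hzero _ (he n₀ x))
  have hstab : ∀ y, (φs (n₀ + 1)).eval y = g.eval y := fun y => sub_eq_zero.mp (hzero _ (hδ n₀ y))
  have hfg : ∀ y, f.eval (g.eval y) = y := by
    intro y
    have h1 : g.eval y = Deq.symm (y - c - N.eval (g.eval y)) := by
      conv_lhs => rw [← hstab y, hφs_succ n₀, hPhi_eval, ← hg]
    have h2 : Dlin (g.eval y) = y - c - N.eval (g.eval y) := by
      have h3 := congrArg Deq h1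
      rw [LinearEquiv.apply_symm_apply] at h3
      exact h3
    rw [hdecomp (g.eval y), h2]
    abel
  exact ⟨⟨fun a b hab => by rw [← hgf a, hab, hgf b], fun y => ⟨g.eval y, hfg y⟩⟩,
    g, pweight_le_zero (hsubφ n₀), hgf, hfg⟩
end
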